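/- With the same setup, if R_Z(h^t) < 1/2, R_Z(h^t) > 0, R^{h^t}_{acc(h^t)}(h^s) > 0, and R_Z(h^s) ≤ R_Z(h^t), then R^{h^t}_{err(h^t)}(h^s) / R^{h^t}_{acc(h^t)}(h^s) > 1; i.e., if the teacher is better than random guessing and the student is at least as good as the teacher, the student must disagree with the teacher relatively more on the teacher's error set than on its accuracy set. -/

import Mathlib

/-!
With Boolean labels the student errs exactly where it disagrees with a correct teacher or agrees
with a wrong one, so `R_Z(h^s) ≤ R_Z(h^t)` says that the student disagrees with the teacher at
least as often on `err(h^t)` as on `acc(h^t)`. A teacher better than random has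
`|err(h^t)| < |acc(h^t)|`, so the same number of disagreements is a larger fraction of the error set.
-/

open Finset

variable {ι X : Type*}

/-- Empirical 0/1 risk of classifier `h` on labeled set `S`. -/
noncomputable def risk (S : Finset ι) (x : ι → X) (y : ι → Bool) (h : X → Bool) : ℝ :=
  (S.filter (fun i => h (x i) ≠ y i)).card / S.card

/-- Disagreement rate of student `hs` with teacher `ht` on set `S`. -/
noncomputable def tsRisk (S : Finset ι) (x : ι → X) (ht hs : X → Bool) : ℝ :=
  (S.filter (fun i => ht (x i) ≠ hs (x i))).card / S.card

/-- Points of `Z` where the teacher is correct. -/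
def accSet (Z : Finset ι) (x : ι → X) (y : ι → Bool) (ht : X → Bool) : Finset ι :=
  Z.filter (fun i => ht (x i) = y i)

/-- Points of `Z` where the teacher is wrong. -/
def errSet (Z : Finset ι) (x : ι → X) (y : ι → Bool) (ht : X → Bool) : Finset ι :=
  Z.filter (fun i => ht (x i) ≠ y i)

def disagreeSet (S : Finset ι) (x : ι → X) (ht hs : X → Bool) : Finset ι :=
  S.filter (fun i => ht (x i) ≠ hs (x i))

section

variable (Z : Finset ι) (x : ι → X) (y : ι → Bool) (ht hs : X → Bool)

theorem tsRisk_eq_card_disagreeSet_div (S : Finset ι) :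
    tsRisk S x ht hs = #(disagreeSet S x ht hs) / #S := rfl

theorem card_accSet_add_card_errSet : #(accSet Z x y ht) + #(errSet Z x y ht) = #Z :=
  card_filter_add_card_filter_not _

theorem card_errSet_lt_card_accSet (hZ : Z.Nonempty)
    (hhalf : risk Z x y ht < 1 / 2) : #(errSet Z x y ht) < #(accSet Z x y ht) := by
  have hsum := card_accSet_add_card_errSet Z x y ht
  have hZpos : (0 : ℝ) < #Z := by exact_mod_cast hZ.card_pos
  have h2 : (#(errSet Z x y ht) : ℝ) < 1 / 2 * #Z := (div_lt_iff₀ hZpos).mp hhalf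
  rw [← hsum, Nat.cast_add] at h2
  exact_mod_cast (by linarith : (#(errSet Z x y ht) : ℝ) < #(accSet Z x y ht))

theorem card_student_errors_add_card_disagreeSet_errSet :
    #(Z.filter fun i => hs (x i) ≠ y i) + #(disagreeSet (errSet Z x y ht) x ht hs) =
      #(disagreeSet (accSet Z x y ht) x ht hs) + #(errSet Z x y ht) := by
  set F := Z.filter fun i => hs (x i) ≠ y i
  have hF_acc : F.filter (fun i => ht (x i) = y i) = disagreeSet (accSet Z x y ht) x ht hs := by
    ext i
    simp only [F, disagreeSet, accSet, mem_filter]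
    cases ht (x i) <;> cases hs (x i) <;> cases y i <;> simp
  have hF_err : F.filter (fun i => ¬ht (x i) = y i) =
      (errSet Z x y ht).filter (fun i => ¬ht (x i) ≠ hs (x i)) := by
    ext i
    simp only [F, errSet, mem_filter]
    cases ht (x i) <;> cases hs (x i) <;> cases y i <;> simp
  rw [← card_filter_add_card_filter_not (s := F) (fun i => ht (x i) = y i), hF_acc, hF_err,
    ← card_filter_add_card_filter_not (s := errSet Z x y ht) (fun i => ht (x i) ≠ hs (x i))]
  simp only [disagreeSet]
  omega

theorem card_disagreeSet_accSet_le_errSet (hle : risk Z x y hs ≤ risk Z x y ht) :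
    #(disagreeSet (accSet Z x y ht) x ht hs) ≤ #(disagreeSet (errSet Z x y ht) x ht hs) := by
  rcases Z.eq_empty_or_nonempty with rfl | hZ
  · simp [disagreeSet, accSet]
  have hZpos : (0 : ℝ) < #Z := by exact_mod_cast hZ.card_pos
  have hcount : #(Z.filter fun i => hs (x i) ≠ y i) ≤ #(errSet Z x y ht) := by
    exact_mod_cast (div_le_div_iff_of_pos_right hZpos).mp hle
  have := card_student_errors_add_card_disagreeSet_errSet Z x y ht hs
  omega

end

theorem better_than_random_general (Z : Finset ι) (x : ι → X) (y : ι → Bool) (ht hs : X → Bool)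
    (herr : (errSet Z x y ht).Nonempty)
    (hhalf : risk Z x y ht < 1 / 2)
    (haccpos : 0 < tsRisk (accSet Z x y ht) x ht hs)
    (hle : risk Z x y hs ≤ risk Z x y ht) :
    tsRisk (errSet Z x y ht) x ht hs / tsRisk (accSet Z x y ht) x ht hs > 1 := by
  set A := accSet Z x y ht
  set E := errSet Z x y ht
  have hEA : (#E : ℝ) < #A := by
    exact_mod_cast card_errSet_lt_card_accSet Z x y ht (herr.mono (filter_subset _ _)) hhalf
  have hE : (0 : ℝ) < #E := by exact_mod_cast herr.card_pos
  simp only [tsRisk_eq_card_disagreeSet_div] at haccpos ⊢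
  have hdA : (0 : ℝ) < #(disagreeSet A x ht hs) :=
    (div_pos_iff_of_pos_right (hE.trans hEA)).mp haccpos
  have hdAE : (#(disagreeSet A x ht hs) : ℝ) ≤ #(disagreeSet E x ht hs) := by
    exact_mod_cast card_disagreeSet_accSet_le_errSet Z x y ht hs hle
  rw [gt_iff_lt, one_lt_div haccpos]
  calc (#(disagreeSet A x ht hs) : ℝ) / #A
      < #(disagreeSet A x ht hs) / #E := div_lt_div_of_pos_left hdA hE hEA
    _ ≤ #(disagreeSet E x ht hs) / #E := div_le_div_of_nonneg_right hdAE hE.le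

theorem better_than_random (Z : Finset ι) (x : ι → X) (y : ι → Bool) (ht hs : X → Bool)
    (hacc : (accSet Z x y ht).Nonempty) (herr : (errSet Z x y ht).Nonempty)
    (hhalf : risk Z x y ht < 1 / 2) (htpos : 0 < risk Z x y ht)
    (haccpos : 0 < tsRisk (accSet Z x y ht) x ht hs)
    (hle : risk Z x y hs ≤ risk Z x y ht) :
    tsRisk (errSet Z x y ht) x ht hs / tsRisk (accSet Z x y ht) x ht hs > 1 :=
  better_than_random_general Z x y ht hs herr hhalf haccpos hle
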